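/- For every vector v ∈ ℤ³ whose squared length ‖v‖² is divisible by d² for a positive integer d, there exists a cubic sublattice of ℤ³ with edge length d containing v. -/

import Mathlib

/-- Dot product on `ℤ³`. -/
def dot3 (a b : Fin 3 → ℤ) : ℤ := a 0 * b 0 + a 1 * b 1 + a 2 * b 2

/-- Cross product on `ℤ³`. -/
def cross3 (a b : Fin 3 → ℤ) : Fin 3 → ℤ :=
  ![a 1 * b 2 - a 2 * b 1, a 2 * b 0 - a 0 * b 2, a 0 * b 1 - a 1 * b 0]

/-- A vector of `ℤ³` is primitive if its coordinates are coprime. -/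
def Primitive (v : Fin 3 → ℤ) : Prop := Int.gcd (Int.gcd (v 0) (v 1)) (v 2) = 1

/-- A cubic sublattice of `ℤ³` with edge length `d`: a subgroup generated by three
pairwise orthogonal vectors of length `d`. -/
def IsCubicLattice (Γ : AddSubgroup (Fin 3 → ℤ)) (d : ℕ) : Prop :=
  ∃ a b c : Fin 3 → ℤ,
    Γ = AddSubgroup.closure {a, b, c} ∧
    dot3 a b = 0 ∧ dot3 a c = 0 ∧ dot3 b c = 0 ∧
    dot3 a a = (d : ℤ)^2 ∧ dot3 b b = (d : ℤ)^2 ∧ dot3 c c = (d : ℤ)^2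

/-!
Induct on the prime factors of `d`. For a prime `p` with `p² ∣ N(v)` it suffices to write
`v = F w` with `N(w) = N(v) / p²` and `F` an additive map of `ℤ³` multiplying dot products by
`p²`, since `F` carries a cubic lattice of edge `e` containing `w` to one of edge `p e` containing
`v`. If `p ∣ v`, take `F = p •`. Otherwise use the Hurwitz order, which is left Euclidean: the left
ideal generated by `v` (as a pure quaternion) and `p` is generated by some `q` of norm `p`. Then
`q v q̄ = p² w` for a pure Hurwitz, hence integral, `w`, and `F a = q̄ a q`.
-/

open Quaternion

lemma dot3_smul_smul (m n : ℤ) (a b : Fin 3 → ℤ) : dot3 (m • a) (n • b) = m * n * dot3 a b := by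
  simp only [dot3, Pi.smul_apply, smul_eq_mul]; ring

lemma eq_zero_of_dot3_self_eq_zero {v : Fin 3 → ℤ} (h : dot3 v v = 0) : v = 0 := by
  unfold dot3 at h
  have h0 : v 0 = 0 := by nlinarith [sq_nonneg (v 0), sq_nonneg (v 1), sq_nonneg (v 2)]
  have h1 : v 1 = 0 := by nlinarith [sq_nonneg (v 0), sq_nonneg (v 1), sq_nonneg (v 2)]
  have h2 : v 2 = 0 := by nlinarith [sq_nonneg (v 0), sq_nonneg (v 1), sq_nonneg (v 2)]
  ext i; fin_cases i <;> assumption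

lemma isCubicLattice_bot : IsCubicLattice ⊥ 0 :=
  ⟨0, 0, 0, by simp [AddSubgroup.closure_singleton_zero], by simp [dot3]⟩

lemma isCubicLattice_top : IsCubicLattice ⊤ 1 := by
  refine ⟨Pi.single 0 1, Pi.single 1 1, Pi.single 2 1, ?_, by decide⟩
  refine ((AddSubgroup.eq_top_iff' _).2 fun v => ?_).symm
  have hv : v = v 0 • Pi.single 0 1 + v 1 • Pi.single 1 1 + v 2 • Pi.single 2 1 := by
    ext i; fin_cases i <;> simp
  rw [hv]
  refine add_mem (add_mem ?_ ?_) ?_ <;>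
    exact zsmul_mem (AddSubgroup.subset_closure (by simp)) _

lemma IsCubicLattice.map {Γ : AddSubgroup (Fin 3 → ℤ)} {d : ℕ} (hΓ : IsCubicLattice Γ d)
    (F : (Fin 3 → ℤ) →+ (Fin 3 → ℤ)) (k : ℕ) (hF : ∀ a b, dot3 (F a) (F b) = k ^ 2 * dot3 a b) :
    IsCubicLattice (Γ.map F) (k * d) := by
  obtain ⟨a, b, c, rfl, hab, hac, hbc, haa, hbb, hcc⟩ := hΓ
  refine ⟨F a, F b, F c, ?_, ?_, ?_, ?_, ?_, ?_, ?_⟩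
  · rw [AddMonoidHom.map_closure, Set.image_insert_eq, Set.image_insert_eq, Set.image_singleton]
  all_goals simp only [hF, hab, hac, hbc, haa, hbb, hcc]; push_cast; ring

/-- The Hurwitz order: quaternions whose coordinates are all in `ℤ` or all in `ℤ + 1/2`. -/
def hurwitz : Subring ℍ[ℚ] where
  carrier := {x | ∃ a b c d : ℤ,
    x.re = a / 2 ∧ x.imI = a / 2 + b ∧ x.imJ = a / 2 + c ∧ x.imK = a / 2 + d}
  zero_mem' := ⟨0, 0, 0, 0, by simp⟩
  one_mem' := ⟨2, -1, -1, -1, by norm_num⟩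
  add_mem' := by
    rintro x y ⟨a, b, c, d, hx⟩ ⟨a', b', c', d', hy⟩
    refine ⟨a + a', b + b', c + c', d + d', ?_⟩
    simp only [re_add, imI_add, imJ_add, imK_add, hx, hy]
    refine ⟨?_, ?_, ?_, ?_⟩ <;> push_cast <;> ring
  neg_mem' := by
    rintro x ⟨a, b, c, d, hx⟩
    refine ⟨-a, -b, -c, -d, ?_⟩
    simp only [re_neg, imI_neg, imJ_neg, imK_neg, hx]
    refine ⟨?_, ?_, ?_, ?_⟩ <;> push_cast <;> ring
  mul_mem' := by
    rintro x y ⟨a, b, c, d, hx⟩ ⟨e, f, g, h, hy⟩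
    refine ⟨-2*b*f - b*e - 2*c*g - c*e - 2*d*h - d*e - f*a - g*a - h*a - a*e,
      b*f + b*e + c*g + c*h + c*e - d*g + d*h + f*a + h*a + a*e,
      b*f - b*h + c*g + c*e + d*f + d*h + d*e + f*a + g*a + a*e,
      b*f + b*g + b*e - c*f + c*g + d*h + d*e + g*a + h*a + a*e, ?_⟩
    simp only [re_mul, imI_mul, imJ_mul, imK_mul, hx, hy]
    refine ⟨?_, ?_, ?_, ?_⟩ <;> push_cast <;> ring

lemma mem_hurwitz_of_half_integers {x : ℍ[ℚ]} {k l m n : ℤ} (hk : x.re = k + 1 / 2)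
    (hl : x.imI = l + 1 / 2) (hm : x.imJ = m + 1 / 2) (hn : x.imK = n + 1 / 2) : x ∈ hurwitz := by
  refine ⟨2 * k + 1, l - k, m - k, n - k, ?_⟩
  simp only [hk, hl, hm, hn]
  refine ⟨?_, ?_, ?_, ?_⟩ <;> push_cast <;> ring

lemma mem_hurwitz_of_integers {x : ℍ[ℚ]} {k l m n : ℤ} (hk : x.re = k)
    (hl : x.imI = l) (hm : x.imJ = m) (hn : x.imK = n) : x ∈ hurwitz := by
  refine ⟨2 * k, l - k, m - k, n - k, ?_⟩
  simp only [hk, hl, hm, hn]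
  refine ⟨?_, ?_, ?_, ?_⟩ <;> push_cast <;> ring

lemma star_mem_hurwitz {x : ℍ[ℚ]} (hx : x ∈ hurwitz) : star x ∈ hurwitz := by
  obtain ⟨a, b, c, d, hx⟩ := hx
  refine ⟨a, -a - b, -a - c, -a - d, ?_⟩
  simp only [re_star, imI_star, imJ_star, imK_star, hx]
  refine ⟨?_, ?_, ?_, ?_⟩ <;> push_cast <;> ring

lemma exists_two_mul_re_eq_of_mem_hurwitz {x : ℍ[ℚ]} (hx : x ∈ hurwitz) :
    ∃ t : ℤ, 2 * x.re = t := by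
  obtain ⟨a, b, c, d, hre, -⟩ := hx
  exact ⟨a, by rw [hre]; ring⟩

lemma exists_normSq_eq_of_mem_hurwitz {x : ℍ[ℚ]} (hx : x ∈ hurwitz) :
    ∃ n : ℕ, normSq x = n := by
  obtain ⟨a, b, c, d, h1, h2, h3, h4⟩ := hx
  have hN : normSq x = ((a * a + a * (b + c + d) + b * b + c * c + d * d : ℤ) : ℚ) := by
    rw [normSq_def', h1, h2, h3, h4]; push_cast; ring
  have hnonneg : 0 ≤ a * a + a * (b + c + d) + b * b + c * c + d * d := by
    exact_mod_cast hN ▸ normSq_nonneg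
  lift a * a + a * (b + c + d) + b * b + c * c + d * d to ℕ using hnonneg with n
  exact ⟨n, by exact_mod_cast hN⟩

lemma exists_eq_add_half_of_sq_sub_round {t : ℚ} (h : (t - round t) ^ 2 = 1 / 4) :
    ∃ k : ℤ, t = k + 1 / 2 := by
  have habs : |t - round t| = 1 / 2 := by
    rw [← sq_eq_sq₀ (abs_nonneg _) (by norm_num), sq_abs, h]; norm_num
  rcases abs_eq (by norm_num : (0 : ℚ) ≤ 1 / 2) |>.1 habs with h | h
  · exact ⟨round t, by linarith⟩
  · exact ⟨round t - 1, by push_cast; linarith⟩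

lemma sq_sub_round_le (t : ℚ) : (t - round t) ^ 2 ≤ 1 / 4 := by
  have := abs_le.1 (abs_sub_round t)
  nlinarith

/-- Rounding the coordinates fails only when all four are half-integers, and then `x` itself is
Hurwitz. -/
lemma exists_mem_hurwitz_normSq_sub_lt_one (x : ℍ[ℚ]) : ∃ c ∈ hurwitz, normSq (x - c) < 1 := by
  set c : ℍ[ℚ] := ⟨round x.re, round x.imI, round x.imJ, round x.imK⟩
  have hc : c ∈ hurwitz := mem_hurwitz_of_integers rfl rfl rfl rfl
  have hN : normSq (x - c) = (x.re - round x.re) ^ 2 + (x.imI - round x.imI) ^ 2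
      + (x.imJ - round x.imJ) ^ 2 + (x.imK - round x.imK) ^ 2 := by
    rw [normSq_def']
    simp only [re_sub, imI_sub, imJ_sub, imK_sub]
    rfl
  by_cases hlt : normSq (x - c) < 1
  · exact ⟨c, hc, hlt⟩
  refine ⟨x, ?_, by simp⟩
  have h1 := sq_sub_round_le x.re
  have h2 := sq_sub_round_le x.imI
  have h3 := sq_sub_round_le x.imJ
  have h4 := sq_sub_round_le x.imK
  obtain ⟨k, hk⟩ := exists_eq_add_half_of_sq_sub_round (t := x.re) (by linarith)
  obtain ⟨l, hl⟩ := exists_eq_add_half_of_sq_sub_round (t := x.imI) (by linarith)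
  obtain ⟨m, hm⟩ := exists_eq_add_half_of_sq_sub_round (t := x.imJ) (by linarith)
  obtain ⟨n, hn⟩ := exists_eq_add_half_of_sq_sub_round (t := x.imK) (by linarith)
  exact mem_hurwitz_of_half_integers hk hl hm hn

lemma exists_mem_hurwitz_normSq_sub_mul_lt (x : ℍ[ℚ]) {q : ℍ[ℚ]} (hq : q ≠ 0) :
    ∃ c ∈ hurwitz, normSq (x - c * q) < normSq q := by
  obtain ⟨c, hc, hlt⟩ := exists_mem_hurwitz_normSq_sub_lt_one (x * q⁻¹)
  refine ⟨c, hc, ?_⟩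
  have hx : x - c * q = (x * q⁻¹ - c) * q := by
    rw [sub_mul, mul_assoc, inv_mul_cancel₀ hq, mul_one]
  rw [hx, map_mul]
  exact mul_lt_of_lt_one_left (normSq_nonneg.lt_of_ne' (normSq_ne_zero.2 hq)) hlt

/-- An element of least nonzero norm generates `M`, by division with remainder. -/
theorem Submodule.isPrincipal_of_forall_mem_hurwitz (M : Submodule hurwitz ℍ[ℚ])
    (hM : ∀ x ∈ M, x ∈ hurwitz) : M.IsPrincipal := by
  classical
  rcases eq_or_ne M ⊥ with rfl | hbot
  · exact bot_isPrincipal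
  have hex : ∃ k : ℕ, ∃ x ∈ M, x ≠ 0 ∧ normSq x = k := by
    obtain ⟨x, hx, hx0⟩ := Submodule.exists_mem_ne_zero_of_ne_bot hbot
    obtain ⟨k, hk⟩ := exists_normSq_eq_of_mem_hurwitz (hM x hx)
    exact ⟨k, x, hx, hx0, hk⟩
  obtain ⟨q, hqM, hq0, hqk⟩ := Nat.find_spec hex
  refine ⟨q, le_antisymm (fun x hx => ?_) ((Submodule.span_singleton_le_iff_mem _ _).2 hqM)⟩
  obtain ⟨c, hc, hlt⟩ := exists_mem_hurwitz_normSq_sub_mul_lt x hq0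
  have hr : x - c * q ∈ M := M.sub_mem hx (M.smul_mem ⟨c, hc⟩ hqM)
  obtain ⟨k, hk⟩ := exists_normSq_eq_of_mem_hurwitz (hM _ hr)
  have hr0 : x - c * q = 0 := by
    by_contra hne
    refine Nat.find_min hex (m := k) ?_ ⟨_, hr, hne, hk⟩
    exact_mod_cast hk ▸ hqk ▸ hlt
  exact Submodule.mem_span_singleton.2 ⟨⟨c, hc⟩, (sub_eq_zero.1 hr0).symm⟩

def pureQuat (v : Fin 3 → ℤ) : ℍ[ℚ] := ⟨0, v 0, v 1, v 2⟩

@[simp] lemma re_pureQuat (v : Fin 3 → ℤ) : (pureQuat v).re = 0 := rfl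
@[simp] lemma imI_pureQuat (v : Fin 3 → ℤ) : (pureQuat v).imI = v 0 := rfl
@[simp] lemma imJ_pureQuat (v : Fin 3 → ℤ) : (pureQuat v).imJ = v 1 := rfl
@[simp] lemma imK_pureQuat (v : Fin 3 → ℤ) : (pureQuat v).imK = v 2 := rfl

lemma pureQuat_mem_hurwitz (v : Fin 3 → ℤ) : pureQuat v ∈ hurwitz :=
  mem_hurwitz_of_integers (k := 0) (by simp) rfl rfl rfl

lemma pureQuat_injective : Function.Injective pureQuat := by
  intro v w h
  have h1 : (v 0 : ℚ) = w 0 := congrArg QuaternionAlgebra.imI h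
  have h2 : (v 1 : ℚ) = w 1 := congrArg QuaternionAlgebra.imJ h
  have h3 : (v 2 : ℚ) = w 2 := congrArg QuaternionAlgebra.imK h
  ext i; fin_cases i <;> assumption_mod_cast

lemma pureQuat_add (v w : Fin 3 → ℤ) : pureQuat (v + w) = pureQuat v + pureQuat w := by
  ext <;> simp

lemma pureQuat_zsmul (n : ℤ) (v : Fin 3 → ℤ) : pureQuat (n • v) = n * pureQuat v := by
  ext <;> simp

lemma normSq_pureQuat (v : Fin 3 → ℤ) : normSq (pureQuat v) = dot3 v v := by
  rw [normSq_def']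
  simp only [re_pureQuat, imI_pureQuat, imJ_pureQuat, imK_pureQuat, dot3]
  push_cast; ring

lemma re_pureQuat_mul_pureQuat (v w : Fin 3 → ℤ) : (pureQuat v * pureQuat w).re = -dot3 v w := by
  simp only [re_mul, re_pureQuat, imI_pureQuat, imJ_pureQuat, imK_pureQuat, dot3]
  push_cast; ring

lemma exists_pureQuat_eq {x : ℍ[ℚ]} (hx : x ∈ hurwitz) (hre : x.re = 0) :
    ∃ w, pureQuat w = x := by
  obtain ⟨a, b, c, d, h1, h2, h3, h4⟩ := hx
  obtain rfl : a = 0 := by rw [hre] at h1; exact_mod_cast (by linarith : (a : ℚ) = 0)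
  refine ⟨![b, c, d], ?_⟩
  ext <;> simp [hre, h2, h3, h4]

lemma re_star_mul_mul (q x : ℍ[ℚ]) : (star q * x * q).re = normSq q * x.re := by
  simp only [re_mul, imI_mul, imJ_mul, imK_mul, re_star, imI_star, imJ_star, imK_star,
    normSq_def']
  ring

lemma star_mul_mul_mul_star_mul_mul (q x y : ℍ[ℚ]) :
    star q * x * q * (star q * y * q) = normSq q • (star q * (x * y) * q) := by
  calc star q * x * q * (star q * y * q) = star q * x * (q * star q) * y * q := by noncomm_ring
    _ = normSq q • (star q * (x * y) * q) := by
      rw [self_mul_star, mul_coe_eq_smul, smul_mul_assoc, smul_mul_assoc]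
      noncomm_ring

lemma exists_addMonoidHom_pureQuat_eq_star_mul_mul {q : ℍ[ℚ]} (hq : q ∈ hurwitz) :
    ∃ F : (Fin 3 → ℤ) →+ (Fin 3 → ℤ), (∀ a, pureQuat (F a) = star q * pureQuat a * q) ∧
      ∀ a b, (dot3 (F a) (F b) : ℚ) = normSq q ^ 2 * dot3 a b := by
  have hconj (a : Fin 3 → ℤ) : ∃ b, pureQuat b = star q * pureQuat a * q :=
    exists_pureQuat_eq
      (mul_mem (mul_mem (star_mem_hurwitz hq) (pureQuat_mem_hurwitz a)) hq)
      (by rw [re_star_mul_mul, re_pureQuat, mul_zero])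
  choose f hf using hconj
  refine ⟨AddMonoidHom.mk' f fun a b => pureQuat_injective ?_, hf, fun a b => ?_⟩
  · rw [pureQuat_add, hf, hf, hf, pureQuat_add]; noncomm_ring
  · have hre := congrArg QuaternionAlgebra.re
      (star_mul_mul_mul_star_mul_mul q (pureQuat a) (pureQuat b))
    rw [← hf, ← hf, re_pureQuat_mul_pureQuat, re_smul, re_star_mul_mul,
      re_pureQuat_mul_pureQuat, smul_eq_mul] at hre
    simp only [AddMonoidHom.mk'_apply]
    linear_combination -hre

lemma exists_normSq_eq_mul_of_mem_span {m : ℕ} {v : Fin 3 → ℤ} (hv : (m : ℤ) ∣ dot3 v v)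
    {x : ℍ[ℚ]} (hx : x ∈ Submodule.span hurwitz {pureQuat v, (m : ℍ[ℚ])}) :
    ∃ k : ℤ, normSq x = m * k := by
  obtain ⟨⟨s, hs⟩, ⟨t, ht⟩, rfl⟩ := Submodule.mem_span_pair.1 hx
  obtain ⟨j, hj⟩ := hv
  obtain ⟨S, hS⟩ := exists_normSq_eq_of_mem_hurwitz hs
  obtain ⟨T, hT⟩ := exists_normSq_eq_of_mem_hurwitz ht
  obtain ⟨r, hr⟩ := exists_two_mul_re_eq_of_mem_hurwitz
    (mul_mem (mul_mem hs (pureQuat_mem_hurwitz v)) (star_mem_hurwitz ht))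
  have hcross : (s * pureQuat v * star (t * m)).re = m * (s * pureQuat v * star t).re := by
    rw [star_mul, star_natCast, ← mul_assoc, ← coe_natCast, mul_coe_eq_smul, smul_mul_assoc,
      re_smul, smul_eq_mul]
  refine ⟨S * j + T * m + r, ?_⟩
  simp only [Subring.smul_def, smul_eq_mul]
  rw [normSq_add, hcross, map_mul, map_mul, normSq_pureQuat, hj, hS, hT, normSq_natCast,
    mul_left_comm, hr]
  push_cast; ring

lemma mem_hurwitz_of_mem_span_pureQuat_natCast {m : ℕ} {v : Fin 3 → ℤ} {x : ℍ[ℚ]}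
    (hx : x ∈ Submodule.span hurwitz {pureQuat v, (m : ℍ[ℚ])}) : x ∈ hurwitz := by
  obtain ⟨⟨s, hs⟩, ⟨t, ht⟩, rfl⟩ := Submodule.mem_span_pair.1 hx
  exact add_mem (mul_mem hs (pureQuat_mem_hurwitz v)) (mul_mem ht (natCast_mem _ m))

lemma dvd_of_pureQuat_eq_natCast_mul {m : ℕ} (hm : m ≠ 0) {v : Fin 3 → ℤ} {y : ℍ[ℚ]}
    (hy : y ∈ hurwitz) (hvy : pureQuat v = m * y) (i : Fin 3) : (m : ℤ) ∣ v i := by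
  have hre : y.re = 0 := by
    have h := congrArg QuaternionAlgebra.re hvy
    rw [re_pureQuat, ← coe_natCast, coe_mul_eq_smul, re_smul, smul_eq_mul] at h
    exact (mul_eq_zero.1 h.symm).resolve_left (Nat.cast_ne_zero.2 hm)
  obtain ⟨w, rfl⟩ := exists_pureQuat_eq hy hre
  rw [← Int.cast_natCast, ← pureQuat_zsmul] at hvy
  rw [pureQuat_injective hvy]
  exact ⟨w i, rfl⟩

/-- The ideal is principal, say generated by `q`. Its norms are multiples of `p` and
`N(q) ∣ N(p) = p²`; norm `p²` would make `q` an associate of `p`, forcing `p ∣ v`. -/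
lemma exists_normSq_eq_prime {p : ℕ} (hp : p.Prime) {v : Fin 3 → ℤ}
    (hpv : ¬ ∀ i, (p : ℤ) ∣ v i) (hv : (p : ℤ) ∣ dot3 v v) :
    ∃ q ∈ Submodule.span hurwitz {pureQuat v, (p : ℍ[ℚ])}, normSq q = p ∧
      ∃ u ∈ hurwitz, pureQuat v = u * q := by
  set M := Submodule.span hurwitz {pureQuat v, (p : ℍ[ℚ])}
  have hMH : ∀ x ∈ M, x ∈ hurwitz := fun _ => mem_hurwitz_of_mem_span_pureQuat_natCast
  obtain ⟨q, hMq⟩ := (M.isPrincipal_of_forall_mem_hurwitz hMH).principal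
  have hdiv : ∀ x ∈ M, ∃ c ∈ hurwitz, x = c * q := by
    intro x hx
    rw [hMq] at hx
    obtain ⟨⟨c, hc⟩, rfl⟩ := Submodule.mem_span_singleton.1 hx
    exact ⟨c, hc, rfl⟩
  have hqM : q ∈ M := hMq ▸ Submodule.mem_span_singleton_self q
  obtain ⟨c, hc, hcq⟩ := hdiv p (Submodule.subset_span (by simp))
  obtain ⟨u, hu, huq⟩ := hdiv (pureQuat v) (Submodule.subset_span (by simp))
  refine ⟨q, hqM, ?_, u, hu, huq⟩
  obtain ⟨k, hk⟩ := exists_normSq_eq_of_mem_hurwitz (hMH q hqM)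
  obtain ⟨l, hl⟩ := exists_normSq_eq_of_mem_hurwitz hc
  have hpk : p ∣ k := by
    obtain ⟨j, hj⟩ := exists_normSq_eq_mul_of_mem_span hv hqM
    exact Int.natCast_dvd_natCast.1 ⟨j, by exact_mod_cast hk ▸ hj⟩
  have hlk : l * k = p ^ 2 := by
    have h := congrArg normSq hcq
    rw [normSq_natCast, map_mul, hk, hl] at h
    exact_mod_cast h.symm
  obtain ⟨i, hi, rfl⟩ := (Nat.dvd_prime_pow hp).1 (Dvd.intro_left l hlk)
  interval_cases i
  · exact absurd (Nat.dvd_one.1 hpk) hp.ne_one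
  · rw [hk, pow_one]
  · exfalso
    have hl1 : l = 1 := by
      simpa [hp.ne_zero] using hlk
    have hcc : star c * c = 1 := by rw [star_mul_self, hl, hl1]; simp
    refine hpv (dvd_of_pureQuat_eq_natCast_mul hp.ne_zero
      (mul_mem hu (star_mem_hurwitz hc)) ?_)
    rw [huq, ← one_mul q, ← hcc, mul_assoc, ← hcq, ← mul_assoc, Nat.cast_comm]

lemma exists_mem_hurwitz_mul_mul_star_eq {p : ℕ} {n : ℤ} {v : Fin 3 → ℤ}
    (hv : dot3 v v = p ^ 2 * n) {q x y u : ℍ[ℚ]} (hx : x ∈ hurwitz) (hy : y ∈ hurwitz)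
    (hu : u ∈ hurwitz) (hq : q = x * pureQuat v + y * p) (hvq : pureQuat v = u * q)
    (hqp : normSq q = p) : ∃ w ∈ hurwitz, q * pureQuat v * star q = p ^ 2 * w := by
  have hqH : q ∈ hurwitz :=
    hq ▸ add_mem (mul_mem hx (pureQuat_mem_hurwitz v)) (mul_mem hy (natCast_mem _ p))
  refine ⟨y * u - n * (x * star q),
    sub_mem (mul_mem hy hu) (mul_mem (intCast_mem _ n) (mul_mem hx (star_mem_hurwitz hqH))), ?_⟩
  have hvv : pureQuat v * pureQuat v = -(p ^ 2 * n) := by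
    rw [← sq, sq_eq_neg_normSq.2 (re_pureQuat v), normSq_pureQuat, hv]; push_cast; rfl
  have hvq' : pureQuat v * star q = u * p := by rw [hvq, mul_assoc, self_mul_star, hqp]; rfl
  calc q * pureQuat v * star q
      = x * (pureQuat v * pureQuat v) * star q + y * p * (pureQuat v * star q) := by
        rw [hq]; noncomm_ring
    _ = p ^ 2 * (y * u - n * (x * star q)) := by
        rw [hvv, hvq']
        simp only [← coe_natCast, ← coe_intCast, ← coe_pow, coe_mul_eq_smul, mul_coe_eq_smul,
          smul_mul_assoc, mul_smul_comm, mul_neg, neg_mul, mul_sub, smul_smul, ← sq]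
        abel

lemma exists_pureQuat_eq_star_mul_mul {p : ℕ} (hp : p.Prime) {v : Fin 3 → ℤ}
    (hpv : ¬ ∀ i, (p : ℤ) ∣ v i) {n : ℤ} (hv : dot3 v v = p ^ 2 * n) :
    ∃ q ∈ hurwitz, normSq q = p ∧ ∃ w, dot3 w w = n ∧ pureQuat v = star q * pureQuat w * q := by
  obtain ⟨q, hqM, hqp, u, hu, hvq⟩ := exists_normSq_eq_prime hp hpv ⟨p * n, by rw [hv]; ring⟩
  obtain ⟨⟨x, hx⟩, ⟨y, hy⟩, hq⟩ := Submodule.mem_span_pair.1 hqM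
  obtain ⟨w', hw', hqvq⟩ := exists_mem_hurwitz_mul_mul_star_eq hv hx hy hu hq.symm hvq hqp
  have hp2 : (p : ℍ[ℚ]) ^ 2 ≠ 0 := by
    rw [← coe_natCast, ← coe_pow, ← coe_zero, Ne, coe_inj]
    exact pow_ne_zero 2 (Nat.cast_ne_zero.2 hp.ne_zero)
  have hre : w'.re = 0 := by
    have h := congrArg QuaternionAlgebra.re hqvq
    have hconj := re_star_mul_mul (star q) (pureQuat v)
    rw [star_star] at hconj
    rw [hconj, re_pureQuat, mul_zero, ← coe_natCast, ← coe_pow,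
      coe_mul_eq_smul, re_smul, smul_eq_mul] at h
    exact (mul_eq_zero.1 h.symm).resolve_left (pow_ne_zero 2 (Nat.cast_ne_zero.2 hp.ne_zero))
  obtain ⟨w, rfl⟩ := exists_pureQuat_eq hw' hre
  refine ⟨q, mem_hurwitz_of_mem_span_pureQuat_natCast hqM, hqp, w, ?_, ?_⟩
  · have h := congrArg normSq hqvq
    rw [map_mul, map_mul, normSq_star, normSq_pureQuat, map_mul, map_pow, normSq_natCast,
      normSq_pureQuat, hqp, hv] at h
    have h' : ((p : ℚ) ^ 4) * dot3 w w = (p ^ 4) * n := by push_cast at h ⊢; linear_combination -h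
    exact_mod_cast mul_left_cancel₀ (pow_ne_zero 4 (Nat.cast_ne_zero.2 hp.ne_zero)) h'
  · refine mul_left_cancel₀ hp2 ?_
    calc (p : ℍ[ℚ]) ^ 2 * pureQuat v = star q * q * pureQuat v * (star q * q) := by
          rw [star_mul_self, hqp, coe_natCast, sq, mul_assoc]
          exact Nat.cast_comm _ _
      _ = star q * (q * pureQuat v * star q) * q := by noncomm_ring
      _ = p ^ 2 * (star q * pureQuat w * q) := by
          rw [hqvq, ← mul_assoc, ← mul_assoc, ← (Nat.cast_commute p (star q)).pow_left 2]
          noncomm_ring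

lemma exists_addMonoidHom_apply_eq_of_dot3_eq {p : ℕ} (hp : p.Prime) {v : Fin 3 → ℤ} {n : ℤ}
    (hv : dot3 v v = p ^ 2 * n) :
    ∃ (w : Fin 3 → ℤ) (F : (Fin 3 → ℤ) →+ (Fin 3 → ℤ)), dot3 w w = n ∧ F w = v ∧
      ∀ a b, dot3 (F a) (F b) = p ^ 2 * dot3 a b := by
  by_cases hpv : ∀ i, (p : ℤ) ∣ v i
  · choose w hw using hpv
    have hvw : (p : ℤ) • w = v := funext fun i => (hw i).symm
    have hF (a b : Fin 3 → ℤ) : dot3 ((p : ℤ) • a) ((p : ℤ) • b) = p ^ 2 * dot3 a b := by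
      rw [dot3_smul_smul, sq]
    refine ⟨w, (p : ℤ) • AddMonoidHom.id _, ?_, hvw, hF⟩
    have hp2 : (p : ℤ) ^ 2 ≠ 0 := pow_ne_zero 2 (Nat.cast_ne_zero.2 hp.ne_zero)
    exact mul_left_cancel₀ hp2 (by rw [← hF, hvw, hv])
  · obtain ⟨q, hq, hqp, w, hw, hvw⟩ := exists_pureQuat_eq_star_mul_mul hp hpv hv
    obtain ⟨F, hF, hFdot⟩ := exists_addMonoidHom_pureQuat_eq_star_mul_mul hq
    refine ⟨w, F, hw, pureQuat_injective ((hF w).trans hvw.symm), fun a b => ?_⟩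
    have h := hFdot a b
    rw [hqp] at h
    exact_mod_cast h

theorem exists_cubic_sublattice (v : Fin 3 → ℤ) (d : ℕ)
    (hdvd : (d : ℤ)^2 ∣ dot3 v v) :
    ∃ Γ : AddSubgroup (Fin 3 → ℤ), IsCubicLattice Γ d ∧ v ∈ Γ := by
  induction d using induction_on_primes generalizing v with
  | zero =>
    obtain rfl := eq_zero_of_dot3_self_eq_zero (by simpa using hdvd)
    exact ⟨⊥, isCubicLattice_bot, zero_mem _⟩
  | one => exact ⟨⊤, isCubicLattice_top, AddSubgroup.mem_top v⟩
  | prime_mul p d hp ih =>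
    obtain ⟨n, hn⟩ := hdvd
    obtain ⟨w, F, hw, rfl, hF⟩ :=
      exists_addMonoidHom_apply_eq_of_dot3_eq hp (n := d ^ 2 * n) (by rw [hn]; push_cast; ring)
    obtain ⟨Γ, hΓ, hwΓ⟩ := ih w ⟨n, hw⟩
    exact ⟨Γ.map F, hΓ.map F p hF, AddSubgroup.mem_map_of_mem F hwΓ⟩
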